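/- arXiv:2410.09232 — 7 statements merged into one kernel-verified Lean document; each statement's English description precedes it below -/
import Mathlib

section
/- Let G be a group, E a finite-index normal subgroup with coset representatives g₁ = 1, g₂, ..., g_k, and z ∈ E of infinite order with ⟨z⟩ central in E and normal in G. Let m : E → ℝ be a homogeneous quasimorphism unbounded on ⟨z⟩. Define m^G : E → ℝ by m^G(h) = (1/k) Σᵢ ε(gᵢ) m(gᵢ h gᵢ⁻¹), where ε(g) ∈ {±1} satisfies g z g⁻¹ = z^{ε(g)}. Then m^G is a homogeneous quasimorphism on E and m^G(z) = m(z), so m^G is unbounded on ⟨z⟩. -/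
/-- The average `m^G(h) = (1/k) Σᵢ ε(gᵢ) m(gᵢ h gᵢ⁻¹)` of a homogeneous
quasimorphism `m` on a finite-index normal subgroup `E`, unbounded on a cyclic
subgroup `⟨z⟩` central in `E` and normal in `G`, is again a homogeneous
quasimorphism on `E`, and `m^G(z) = m(z)`, so `m^G` is unbounded on `⟨z⟩`. -/
theorem averaged_quasimorphism_homogeneous {G : Type*} [Group G] (E : Subgroup G)
    (hEn : E.Normal) (hEf : E.FiniteIndex)
    (k : ℕ) (hk : 0 < k) (g : Fin k → G) (hg1 : g ⟨0, hk⟩ = 1)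
    (hreps : Function.Bijective (fun i : Fin k => (QuotientGroup.mk (g i) : G ⧸ E)))
    (z : G) (hzE : z ∈ E) (hz : ¬IsOfFinOrder z)
    (hcent : ∀ e ∈ E, e * z = z * e) (hnorm : (Subgroup.zpowers z).Normal)
    (m : G → ℝ) (D : ℝ)
    (hD : ∀ h ∈ E, ∀ h' ∈ E, |m (h * h') - m h - m h'| ≤ D)
    (hhom : ∀ h ∈ E, ∀ n : ℤ, m (h ^ n) = (n : ℝ) * m h)
    (hunb : m z ≠ 0)
    (ε : G → ℤ) (hεpm : ∀ x : G, ε x = 1 ∨ ε x = -1)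
    (hε : ∀ x : G, x * z * x⁻¹ = z ^ ε x)
    (mG : G → ℝ)
    (hmG : ∀ h : G,
      mG h = (1 / (k : ℝ)) * ∑ i : Fin k, (ε (g i) : ℝ) * m (g i * h * (g i)⁻¹)) :
    (∃ D' : ℝ, ∀ h ∈ E, ∀ h' ∈ E, |mG (h * h') - mG h - mG h'| ≤ D') ∧
    (∀ h ∈ E, ∀ n : ℤ, mG (h ^ n) = (n : ℝ) * mG h) ∧
    mG z = m z := by
  have hk' : (k : ℝ) ≠ 0 := Nat.cast_ne_zero.mpr hk.ne'
  have hεabs : ∀ x : G, |(ε x : ℝ)| = 1 := by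
    intro x
    rcases hεpm x with h | h <;> rw [h] <;> norm_num
  refine ⟨⟨D, ?_⟩, ?_, ?_⟩
  · intro h hh h' hh'
    have key : mG (h * h') - mG h - mG h'
        = (1 / (k : ℝ)) * ∑ i : Fin k, (ε (g i) : ℝ) *
            (m (g i * h * (g i)⁻¹ * (g i * h' * (g i)⁻¹)) - m (g i * h * (g i)⁻¹)
              - m (g i * h' * (g i)⁻¹)) := by
      rw [hmG, hmG, hmG]
      rw [← mul_sub, ← mul_sub, ← Finset.sum_sub_distrib, ← Finset.sum_sub_distrib]
      congr 1
      apply Finset.sum_congr rfl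
      intro i _
      have : g i * (h * h') * (g i)⁻¹ = g i * h * (g i)⁻¹ * (g i * h' * (g i)⁻¹) := by
        group
      rw [this]; ring
    rw [key, abs_mul, abs_of_nonneg (by positivity : (0:ℝ) ≤ 1 / (k:ℝ))]
    have hbound : |∑ i : Fin k, (ε (g i) : ℝ) *
            (m (g i * h * (g i)⁻¹ * (g i * h' * (g i)⁻¹)) - m (g i * h * (g i)⁻¹)
              - m (g i * h' * (g i)⁻¹))| ≤ (k : ℝ) * D := by
      calc _ ≤ ∑ i : Fin k, |(ε (g i) : ℝ) *
            (m (g i * h * (g i)⁻¹ * (g i * h' * (g i)⁻¹)) - m (g i * h * (g i)⁻¹)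
              - m (g i * h' * (g i)⁻¹))| := Finset.abs_sum_le_sum_abs _ _
        _ ≤ ∑ _i : Fin k, D := by
            apply Finset.sum_le_sum
            intro i _
            rw [abs_mul, hεabs, one_mul]
            exact hD _ (hEn.conj_mem h hh (g i)) _ (hEn.conj_mem h' hh' (g i))
        _ = (k : ℝ) * D := by simp [mul_comm]
    calc 1 / (k : ℝ) * |_| ≤ 1 / (k : ℝ) * ((k : ℝ) * D) := by
          apply mul_le_mul_of_nonneg_left hbound (by positivity)
      _ = D := by field_simp
  · intro h hh n
    rw [hmG, hmG]
    have step : ∀ i : Fin k, (ε (g i) : ℝ) * m (g i * h ^ n * (g i)⁻¹)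
        = (n : ℝ) * ((ε (g i) : ℝ) * m (g i * h * (g i)⁻¹)) := by
      intro i
      have hc : g i * h ^ n * (g i)⁻¹ = (g i * h * (g i)⁻¹) ^ n := by
        rw [conj_zpow]
      rw [hc, hhom _ (hEn.conj_mem h hh (g i)) n]
      ring
    rw [Finset.sum_congr rfl (fun i _ => step i), ← Finset.mul_sum]
    ring
  · rw [hmG]
    have : ∀ i : Fin k, (ε (g i) : ℝ) * m (g i * z * (g i)⁻¹) = m z := by
      intro i
      rw [hε (g i), hhom z hzE (ε (g i))]
      rcases hεpm (g i) with h | h <;> rw [h] <;> push_cast <;> ring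
    simp only [this, Finset.sum_const, Finset.card_univ, Fintype.card_fin, nsmul_eq_mul]
    field_simp
end

section
/- Let G, E, z, m be as follows: E a finite-index normal subgroup of G with coset representatives g₁=1,...,g_k, z ∈ E of infinite order with ⟨z⟩ central in E and normal in G, m : E → ℝ a homogeneous quasimorphism, and m^G(h) = (1/k) Σᵢ ε(gᵢ) m(gᵢ h gᵢ⁻¹) its averaged quasimorphism. Then |m^G| is G-invariant: for every g ∈ G and h ∈ E, m^G(g h g⁻¹) = ε(g) · m^G(h), and in particular |m^G(g h g⁻¹)| = |m^G(h)|. -/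
/-- The averaged quasimorphism `m^G` satisfies
`m^G(g h g⁻¹) = ε(g) · m^G(h)` for all `g ∈ G`, `h ∈ E`; in particular `|m^G|`
is `G`-invariant. -/
theorem averaged_quasimorphism_G_invariant {G : Type*} [Group G] (E : Subgroup G)
    (hEn : E.Normal) (hEf : E.FiniteIndex)
    (k : ℕ) (hk : 0 < k) (g : Fin k → G) (hg1 : g ⟨0, hk⟩ = 1)
    (hreps : Function.Bijective (fun i : Fin k => (QuotientGroup.mk (g i) : G ⧸ E)))
    (z : G) (hzE : z ∈ E) (hz : ¬IsOfFinOrder z)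
    (hcent : ∀ e ∈ E, e * z = z * e) (hnorm : (Subgroup.zpowers z).Normal)
    (m : G → ℝ) (D : ℝ)
    (hD : ∀ h ∈ E, ∀ h' ∈ E, |m (h * h') - m h - m h'| ≤ D)
    (hhom : ∀ h ∈ E, ∀ n : ℤ, m (h ^ n) = (n : ℝ) * m h)
    (ε : G → ℤ) (hεpm : ∀ x : G, ε x = 1 ∨ ε x = -1)
    (hε : ∀ x : G, x * z * x⁻¹ = z ^ ε x)
    (mG : G → ℝ)
    (hmG : ∀ h : G,
      mG h = (1 / (k : ℝ)) * ∑ i : Fin k, (ε (g i) : ℝ) * m (g i * h * (g i)⁻¹)) :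
    ∀ x : G, ∀ h ∈ E,
      mG (x * h * x⁻¹) = (ε x : ℝ) * mG h ∧ |mG (x * h * x⁻¹)| = |mG h| := by
  have hzinj : Function.Injective (fun n : ℤ => z ^ n) :=
    injective_zpow_iff_not_isOfFinOrder.2 hz
  -- ε is multiplicative
  have hεmul : ∀ a b : G, ε (a * b) = ε a * ε b := by
    intro a b
    apply hzinj
    show z ^ ε (a * b) = z ^ (ε a * ε b)
    calc z ^ ε (a * b) = (a * b) * z * (a * b)⁻¹ := (hε _).symm
      _ = a * (b * z * b⁻¹) * a⁻¹ := by group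
      _ = a * z ^ ε b * a⁻¹ := by rw [hε b]
      _ = (a * z * a⁻¹) ^ ε b := by rw [conj_zpow]
      _ = (z ^ ε a) ^ ε b := by rw [hε a]
      _ = z ^ (ε a * ε b) := by rw [← zpow_mul]
  -- ε is trivial on E
  have hεE : ∀ e ∈ E, ε e = 1 := by
    intro e he
    apply hzinj
    show z ^ ε e = z ^ (1 : ℤ)
    rw [← hε e, zpow_one]
    rw [hcent e he]
    group
  -- m 1 = 0
  have hm1 : m 1 = 0 := by
    have := hhom 1 E.one_mem 0
    simpa using this
  have hD0 : 0 ≤ D := by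
    have := hD 1 E.one_mem 1 E.one_mem
    simp [hm1] at this
    linarith [abs_nonneg (m 1), this]
  -- m of inverse
  have hminv : ∀ e ∈ E, m e⁻¹ = -m e := by
    intro e he
    have := hhom e he (-1)
    simpa using this
  -- conjugation invariance by elements of E
  have hconj : ∀ f ∈ E, ∀ h ∈ E, m (f * h * f⁻¹) = m h := by
    intro f hf h hh
    have key : ∀ n : ℕ, (n : ℝ) * |m (f * h * f⁻¹) - m h| ≤ 2 * D := by
      intro n
      have hpow : (f * h * f⁻¹) ^ (n : ℤ) = f * (h ^ (n : ℤ) * f⁻¹) := by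
        rw [conj_zpow]; group
      have hmem : f * h * f⁻¹ ∈ E := mul_mem (mul_mem hf hh) (inv_mem hf)
      have h1 := hD f hf (h ^ (n : ℤ) * f⁻¹) (mul_mem (zpow_mem hh _) (inv_mem hf))
      have h2 := hD (h ^ (n : ℤ)) (zpow_mem hh _) f⁻¹ (inv_mem hf)
      have e1 : m ((f * h * f⁻¹) ^ (n : ℤ)) = (n : ℝ) * m (f * h * f⁻¹) := by
        rw [hhom _ hmem]; push_cast; ring
      have e2 : m (h ^ (n : ℤ)) = (n : ℝ) * m h := by
        rw [hhom _ hh]; push_cast; ring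
      rw [hpow] at e1
      rw [e2, hminv f hf] at h2
      rw [e1] at h1
      have h3 : (n:ℝ) * m (f * h * f⁻¹) - (n:ℝ) * m h
          = ((n:ℝ) * m (f * h * f⁻¹) - m f - m (h ^ (n:ℤ) * f⁻¹))
            + (m (h ^ (n:ℤ) * f⁻¹) - (n:ℝ) * m h - -m f) := by ring
      have t : |(n:ℝ) * m (f * h * f⁻¹) - (n:ℝ) * m h| ≤ 2 * D := by
        rw [h3]
        calc _ ≤ |(n:ℝ) * m (f * h * f⁻¹) - m f - m (h ^ (n:ℤ) * f⁻¹)|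
              + |m (h ^ (n:ℤ) * f⁻¹) - (n:ℝ) * m h - -m f| := abs_add_le _ _
          _ ≤ D + D := add_le_add h1 h2
          _ = 2 * D := by ring
      calc (n : ℝ) * |m (f * h * f⁻¹) - m h|
          = |(n:ℝ) * (m (f * h * f⁻¹) - m h)| := by
            rw [abs_mul, Nat.abs_cast]
        _ = |(n:ℝ) * m (f * h * f⁻¹) - (n:ℝ) * m h| := by ring_nf
        _ ≤ 2 * D := t
    by_contra hne
    have habs : 0 < |m (f * h * f⁻¹) - m h| := abs_pos.2 (sub_ne_zero.2 hne)
    obtain ⟨n, hn⟩ := exists_nat_gt (2 * D / |m (f * h * f⁻¹) - m h|)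
    have hk2 := key n
    rw [div_lt_iff₀ habs] at hn
    linarith
  -- main argument
  intro x h hh
  set eqv : Fin k ≃ G ⧸ E := Equiv.ofBijective _ hreps with heqv
  set σ : Fin k ≃ Fin k := eqv.trans ((Equiv.mulRight (QuotientGroup.mk x : G ⧸ E)).trans eqv.symm) with hσ
  have hσmk : ∀ i : Fin k, (QuotientGroup.mk (g (σ i)) : G ⧸ E) = QuotientGroup.mk (g i * x) := by
    intro i
    have : eqv (σ i) = eqv i * QuotientGroup.mk x := by
      simp [hσ, Equiv.trans_apply]
    have h2 : (QuotientGroup.mk (g (σ i)) : G ⧸ E) = QuotientGroup.mk (g i) * QuotientGroup.mk x := by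
      simpa [heqv, Equiv.ofBijective] using this
    rw [h2]
    rfl
  have hEmem : ∀ i : Fin k, (g (σ i))⁻¹ * (g i * x) ∈ E := by
    intro i
    exact (QuotientGroup.eq.mp (hσmk i))
  have hterm : ∀ i : Fin k,
      (ε (g i) : ℝ) * m (g i * (x * h * x⁻¹) * (g i)⁻¹)
        = (ε x : ℝ) * ((ε (g (σ i)) : ℝ) * m (g (σ i) * h * (g (σ i))⁻¹)) := by
    intro i
    set e := (g (σ i))⁻¹ * (g i * x) with he
    have hge : g i * x = g (σ i) * e := by rw [he]; group
    have heE : e ∈ E := hEmem i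
    have hfE : g (σ i) * e * (g (σ i))⁻¹ ∈ E := hEn.conj_mem e heE _
    have hgE : g (σ i) * h * (g (σ i))⁻¹ ∈ E := hEn.conj_mem h hh _
    have hrewrite : g i * (x * h * x⁻¹) * (g i)⁻¹
        = (g (σ i) * e * (g (σ i))⁻¹) * (g (σ i) * h * (g (σ i))⁻¹)
          * (g (σ i) * e * (g (σ i))⁻¹)⁻¹ := by
      have : g i * (x * h * x⁻¹) * (g i)⁻¹ = (g i * x) * h * (g i * x)⁻¹ := by group
      rw [this, hge]; group
    have hmval : m (g i * (x * h * x⁻¹) * (g i)⁻¹) = m (g (σ i) * h * (g (σ i))⁻¹) := by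
      rw [hrewrite]; exact hconj _ hfE _ hgE
    have hεval : ε (g i) = ε x * ε (g (σ i)) := by
      have h1 : ε (g i * x) = ε (g i) * ε x := hεmul _ _
      have h2 : ε (g i * x) = ε (g (σ i)) := by
        rw [hge, hεmul, hεE e heE, mul_one]
      have hsq : ε x * ε x = 1 := by rcases hεpm x with hp | hp <;> rw [hp] <;> ring
      calc ε (g i) = ε (g i) * (ε x * ε x) := by rw [hsq, mul_one]
        _ = (ε (g i) * ε x) * ε x := by ring
        _ = ε (g (σ i)) * ε x := by rw [← h1, h2]
        _ = ε x * ε (g (σ i)) := by ring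
    rw [hmval, hεval]
    push_cast
    ring
  have hsum : mG (x * h * x⁻¹) = (ε x : ℝ) * mG h := by
    rw [hmG (x * h * x⁻¹), hmG h]
    have : ∑ i : Fin k, (ε (g i) : ℝ) * m (g i * (x * h * x⁻¹) * (g i)⁻¹)
        = (ε x : ℝ) * ∑ i : Fin k, (ε (g i) : ℝ) * m (g i * h * (g i)⁻¹) := by
      rw [Finset.mul_sum]
      rw [show (∑ i : Fin k, (ε x : ℝ) * ((ε (g i) : ℝ) * m (g i * h * (g i)⁻¹)))
          = ∑ i : Fin k, (ε x : ℝ) * ((ε (g (σ i)) : ℝ) * m (g (σ i) * h * (g (σ i))⁻¹))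
          from (Equiv.sum_comp σ (fun j => (ε x : ℝ) * ((ε (g j) : ℝ) * m (g j * h * (g j)⁻¹)))).symm]
      exact Finset.sum_congr rfl fun i _ => hterm i
    rw [this]
    ring
  refine ⟨hsum, ?_⟩
  rw [hsum, abs_mul]
  rcases hεpm x with hp | hp <;> rw [hp] <;> norm_num
end

section
/- Consider a group extension 0 → ⟨z⟩ → S → K → 0 with z of infinite order and K virtually cyclic. Let g ∈ S be such that 𝔭(g) ∈ K has infinite order. Then there exists an element g' ∈ 𝔭⁻¹(𝔭(⟨g⟩)) with g' ∉ ⟨z⟩ such that ⟨g'⟩ is a normal subgroup of S. -/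
/-!
Conjugation acts on `⟨z⟩ ≅ ℤ` through a sign character `e : S → ℤˣ`. Pulling a cyclic subgroup of
finite index of `K` back to `S`, taking its normal core and intersecting with `ker e` gives a normal
subgroup `M` of finite index, centralising `z`, whose image in `K` is cyclic, generated by `𝔭(w)`
say; so `M = ⟨z, w⟩ ≅ ℤ²`. In the basis `z, w`, conjugation by `s` is a triangular matrix
`[[e s, a s], [0, f s]]` with `f s = ±1`, and it acts trivially on `M` for `s ∈ M`. Finiteness
of `S / M` forces `a s = 0` whenever `e s = f s`, and then averaging `w` over one element `σ` with
`e σ ≠ f σ` gives an eigenvector `v` of every conjugation, with `𝔭(v) = 𝔭(w)²`. A suitable power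
of `v` lies over `⟨𝔭(g)⟩`.
-/

open Subgroup

section

variable {G : Type*} [Group G]

theorem exists_conj_eq_zpow_units {x : G} (hx : ¬IsOfFinOrder x) [(zpowers x).Normal] :
    ∃ χ : G →* ℤˣ, ∀ g, g * x * g⁻¹ = x ^ (χ g : ℤ) := by
  have hinj := injective_zpow_iff_not_isOfFinOrder.2 hx
  have hconj : ∀ g : G, ∃ m : ℤ, g * x * g⁻¹ = x ^ m := fun g ↦
    (mem_zpowers_iff.1 (Normal.conj_mem inferInstance x (mem_zpowers x) g)).imp fun _ h ↦ h.symm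
  have hunit : ∀ g : G, ∃ u : ℤˣ, g * x * g⁻¹ = x ^ (u : ℤ) := by
    intro g
    obtain ⟨m, hm⟩ := hconj g
    obtain ⟨m', hm'⟩ := hconj g⁻¹
    have hmm' : m' * m = 1 := hinj <| by
      simp only [zpow_mul, ← hm', zpow_one, conj_zpow, ← hm]
      group
    exact ⟨⟨m, m', by rw [mul_comm, hmm'], hmm'⟩, hm⟩
  choose χ hχ using hunit
  refine ⟨MonoidHom.mk' χ fun g h ↦ Units.ext <| hinj ?_, hχ⟩
  simp only [Units.val_mul, zpow_mul, ← hχ, conj_zpow]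
  group

theorem normal_zpowers_of_conj_eq_zpow_units {x : G}
    (h : ∀ g, ∃ u : ℤˣ, g * x * g⁻¹ = x ^ (u : ℤ)) : (zpowers x).Normal where
  conj_mem y hy g := by
    obtain ⟨k, rfl⟩ := mem_zpowers_iff.1 hy
    obtain ⟨u, hu⟩ := h g
    rw [← conj_zpow, hu, ← zpow_mul]
    exact zpow_mem (mem_zpowers x) _

theorem conj_pow_eq_mul_zpow {y z w : G} {b : ℤ} (hyz : y * z * y⁻¹ = z)
    (hyw : y * w * y⁻¹ = w * z ^ b) (m : ℕ) : y ^ m * w * (y ^ m)⁻¹ = w * z ^ (m * b) := by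
  induction m with
  | zero => simp
  | succ m ih =>
    calc y ^ (m + 1) * w * (y ^ (m + 1))⁻¹
        = y * (y ^ m * w * (y ^ m)⁻¹) * y⁻¹ := by group
      _ = (y * w * y⁻¹) * (y * z * y⁻¹) ^ (m * b) := by rw [ih, ← conj_mul, conj_zpow]
      _ = w * z ^ ((m + 1 : ℕ) * b) := by
        rw [hyw, hyz, mul_assoc, ← zpow_add]
        push_cast
        ring_nf

/-- `s²` acts on `w` unipotently, `w ↦ w z^(2εa)`, and a power of it fixes `w`. -/
theorem conj_eq_zpow_of_commute_pow {z w s : G} (hz : ¬IsOfFinOrder z) (hzw : Commute z w)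
    {ε : ℤˣ} {a : ℤ} (hsz : s * z * s⁻¹ = z ^ (ε : ℤ))
    (hsw : s * w * s⁻¹ = w ^ (ε : ℤ) * z ^ a)
    {n : ℕ} (hn : 0 < n) (hsn : Commute (s ^ n) w) : s * w * s⁻¹ = w ^ (ε : ℤ) := by
  have hsqz : s ^ 2 * z * (s ^ 2)⁻¹ = z := by
    calc s ^ 2 * z * (s ^ 2)⁻¹ = s * (s * z * s⁻¹) * s⁻¹ := by rw [sq]; group
      _ = z := by rw [hsz, ← conj_zpow, hsz, ← zpow_mul, Int.units_coe_mul_self, zpow_one]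
  have hsqw : s ^ 2 * w * (s ^ 2)⁻¹ = w * z ^ (2 * ε * a) := by
    calc s ^ 2 * w * (s ^ 2)⁻¹ = s * (w ^ (ε : ℤ) * z ^ a) * s⁻¹ := by rw [← hsw, sq]; group
      _ = (s * w * s⁻¹) ^ (ε : ℤ) * (s * z * s⁻¹) ^ a := by
        rw [← conj_mul, conj_zpow, conj_zpow]
      _ = w * z ^ (2 * ε * a) := by
        rw [hsw, hsz, ((hzw.zpow_zpow a ε).symm).mul_zpow, ← zpow_mul, Int.units_coe_mul_self,
          zpow_one, mul_assoc, ← zpow_mul, ← zpow_mul, ← zpow_add]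
        ring_nf
  have hpow := conj_pow_eq_mul_zpow hsqz hsqw n
  rw [← pow_mul, mul_comm, pow_mul, (hsn.pow_left 2).eq, mul_inv_cancel_right,
    left_eq_mul, ← zpow_zero z] at hpow
  have ha : a = 0 := by
    have := injective_zpow_iff_not_isOfFinOrder.2 hz hpow
    rcases Int.units_eq_one_or ε with h | h <;> simp [h] at this <;> omega
  rw [hsw, ha, zpow_zero, mul_one]

theorem exists_forall_map_ne_map_mul_inv_eq (e f : G →* ℤˣ) :
    ∃ σ : G, ∀ t, e t ≠ f t → e (t * σ⁻¹) = f (t * σ⁻¹) := by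
  by_cases h : ∃ σ, e σ ≠ f σ
  · obtain ⟨σ, hσ⟩ := h
    refine ⟨σ, fun t ht ↦ ?_⟩
    rw [Int.units_ne_iff_eq_neg] at hσ ht
    simp [ht, hσ]
  · push Not at h
    exact ⟨1, fun t ht ↦ absurd (h t) ht⟩

theorem conj_mul_zpow_eq_zpow {t x y : G} {u : ℤˣ} (hxy : Commute x y)
    (hx : t * x * t⁻¹ = x ^ (u : ℤ)) (hy : t * y * t⁻¹ = y ^ (u : ℤ)) (k : ℤ) :
    t * (x * y ^ k) * t⁻¹ = (x * y ^ k) ^ (u : ℤ) := by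
  rw [← conj_mul, ← conj_zpow, hx, hy, ← zpow_mul, mul_comm, zpow_mul,
    (hxy.zpow_right k).mul_zpow]

theorem mul_conj_eq_zpow_mul {s t x : G} {u u' : ℤˣ} (hs : s * x * s⁻¹ = x ^ (u : ℤ))
    (ht : t * x * t⁻¹ = x ^ (u' : ℤ)) : s * t * x * (s * t)⁻¹ = x ^ ((u * u' : ℤˣ) : ℤ) := by
  calc s * t * x * (s * t)⁻¹ = s * (t * x * t⁻¹) * s⁻¹ := by group
    _ = x ^ ((u * u' : ℤˣ) : ℤ) := by rw [ht, ← conj_zpow, hs, ← zpow_mul, Units.val_mul]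

/-- In the basis `z, w` of `⟨z, w⟩ ≅ ℤ²`, conjugation by `s` is `[[e s, a], [0, f s]]`. Those `s`
with `e s = f s` act as the scalar `e s`, and all others differ from `σ` by such an element; so
`w` averaged over `σ` spans a line that every conjugation preserves. -/
theorem exists_conj_eq_zpow_units_of_triangular {z w : G} {e f : G →* ℤˣ}
    (hz : ¬IsOfFinOrder z) (hzw : Commute z w) (he : ∀ s, s * z * s⁻¹ = z ^ (e s : ℤ))
    (hf : ∀ s, ∃ a : ℤ, s * w * s⁻¹ = w ^ (f s : ℤ) * z ^ a)
    (hcomm : ∀ s, Commute w (s * w * s⁻¹)) (hpow : ∀ s, ∃ n, 0 < n ∧ Commute (s ^ n) w) :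
    ∃ σ : G, ∀ t, ∃ u : ℤˣ, t * (w * (σ * w * σ⁻¹) ^ (f σ : ℤ)) * t⁻¹ =
      (w * (σ * w * σ⁻¹) ^ (f σ : ℤ)) ^ (u : ℤ) := by
  have hdiag : ∀ t, e t = f t → t * w * t⁻¹ = w ^ (e t : ℤ) := by
    intro t ht
    obtain ⟨a, ha⟩ := hf t
    obtain ⟨n, hn, htn⟩ := hpow t
    exact conj_eq_zpow_of_commute_pow hz hzw (he t) (ht ▸ ha) hn htn
  obtain ⟨σ, hσ⟩ := exists_forall_map_ne_map_mul_inv_eq e f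
  refine ⟨σ, ?_⟩
  set y := σ * w * σ⁻¹
  set v := w * y ^ (f σ : ℤ)
  have hdiag_y : ∀ t, e t = f t → t * y * t⁻¹ = y ^ (e t : ℤ) := by
    intro t ht
    have hconj : ∀ χ : G →* ℤˣ, χ (σ⁻¹ * t * σ) = χ t := fun χ ↦ by
      simp only [map_mul, map_inv, mul_comm _ (χ t), inv_mul_cancel_right]
    calc t * y * t⁻¹
        = σ * ((σ⁻¹ * t * σ) * w * (σ⁻¹ * t * σ)⁻¹) * σ⁻¹ := by simp only [y]; group
      _ = y ^ (e t : ℤ) := by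
        rw [hdiag _ (by rw [hconj, hconj, ht]), hconj, conj_zpow]
  have hdiag_v : ∀ t, e t = f t → t * v * t⁻¹ = v ^ (e t : ℤ) := fun t ht ↦
    conj_mul_zpow_eq_zpow (hcomm σ) (hdiag t ht) (hdiag_y t ht) _
  have hσv : σ * v * σ⁻¹ = v ^ (f σ : ℤ) := by
    have hσσ : σ * y * σ⁻¹ = w := by
      have h := hdiag (σ * σ) (by simp)
      rw [map_mul, Int.units_mul_self, Units.val_one, zpow_one] at h
      rw [← h]; simp only [y]; group
    rw [← conj_mul, ← conj_zpow, hσσ, ((hcomm σ).zpow_right _).mul_zpow, ← zpow_mul,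
      Int.units_coe_mul_self, zpow_one, ((hcomm σ).zpow_left _).eq]
  intro t
  by_cases ht : e t = f t
  · exact ⟨e t, hdiag_v t ht⟩
  · have h := mul_conj_eq_zpow_mul (hdiag_v _ (hσ t ht)) hσv
    rw [inv_mul_cancel_right] at h
    exact ⟨_, h⟩

end

section Extension

open QuotientGroup

variable {S : Type*} [Group S] {z : S} [(zpowers z).Normal]

theorem commute_of_mk_mem_zpowers {w x : S} (hzw : Commute z w)
    (hx : (x : S ⧸ zpowers z) ∈ zpowers (w : S ⧸ zpowers z)) : Commute x w := by
  obtain ⟨k, hk⟩ := mem_zpowers_iff.1 hx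
  rw [← mk_zpow, QuotientGroup.eq] at hk
  obtain ⟨j, hj⟩ := mem_zpowers_iff.1 hk
  rw [inv_mul_eq_iff_eq_mul.1 hj.symm]
  exact ((Commute.refl w).zpow_left k).mul_left (hzw.zpow_left j)

theorem exists_normal_finiteIndex_commute_map_isCyclic (hz : ¬IsOfFinOrder z)
    (hK : ∃ H : Subgroup (S ⧸ zpowers z), H.FiniteIndex ∧ IsCyclic H) :
    ∃ M : Subgroup S, M.Normal ∧ M.FiniteIndex ∧ (∀ x ∈ M, Commute z x) ∧
      IsCyclic (M.map (mk' (zpowers z))) := by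
  obtain ⟨e, he⟩ := exists_conj_eq_zpow_units hz
  obtain ⟨H, hH, hHcyc⟩ := hK
  have : (H.comap (mk' (zpowers z))).FiniteIndex :=
    ⟨by rw [index_comap_of_surjective _ (mk'_surjective _)]; exact hH.index_ne_zero⟩
  refine ⟨(H.comap (mk' _)).normalCore ⊓ e.ker, inferInstance, inferInstance, ?_, ?_⟩
  · rintro x ⟨-, hx⟩
    have h := he x
    rw [MonoidHom.mem_ker.1 hx, Units.val_one, zpow_one, mul_inv_eq_iff_eq_mul] at h
    exact h.symm
  · exact isCyclic_of_le
      ((map_mono (inf_le_left.trans (normalCore_le _))).trans (map_comap_le _ _))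

theorem exists_mk_eq_sq_forall_conj_eq_zpow_units (hz : ¬IsOfFinOrder z) {M : Subgroup S}
    [M.Normal] [M.FiniteIndex] (hMz : ∀ x ∈ M, Commute z x) {w : S} (hw : w ∈ M)
    (hMw : M.map (mk' (zpowers z)) = zpowers (w : S ⧸ zpowers z))
    (hw' : ¬IsOfFinOrder (w : S ⧸ zpowers z)) :
    ∃ v : S, (v : S ⧸ zpowers z) = (w : S ⧸ zpowers z) ^ 2 ∧
      ∀ s, ∃ u : ℤˣ, s * v * s⁻¹ = v ^ (u : ℤ) := by
  have : (zpowers (w : S ⧸ zpowers z)).Normal :=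
    hMw ▸ Normal.map inferInstance _ (mk'_surjective _)
  obtain ⟨e, he⟩ := exists_conj_eq_zpow_units hz
  obtain ⟨f, hf⟩ := exists_conj_eq_zpow_units hw'
  have hMw' : ∀ x ∈ M, Commute x w := fun x hx ↦
    commute_of_mk_mem_zpowers (hMz w hw) (hMw ▸ mem_map_of_mem _ hx)
  have hfS : ∀ s, ∃ a : ℤ, s * w * s⁻¹ = w ^ (f.comp (mk' _) s : ℤ) * z ^ a := by
    intro s
    have h := hf (s : S ⧸ zpowers z)
    rw [← mk_inv, ← mk_mul, ← mk_mul, ← mk_zpow, eq_comm, QuotientGroup.eq] at h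
    obtain ⟨a, ha⟩ := mem_zpowers_iff.1 h
    exact ⟨a, inv_mul_eq_iff_eq_mul.1 ha.symm⟩
  have hpow : ∀ s, ∃ n, 0 < n ∧ Commute (s ^ n) w := fun s ↦ by
    obtain ⟨n, hn, -, hsn⟩ := exists_pow_mem_of_index_ne_zero ‹M.FiniteIndex›.index_ne_zero s
    exact ⟨n, hn, hMw' _ hsn⟩
  obtain ⟨σ, hσ⟩ := exists_conj_eq_zpow_units_of_triangular hz (hMz w hw) he hfS
    (fun s ↦ (hMw' _ (Normal.conj_mem inferInstance w hw s)).symm) hpow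
  refine ⟨_, ?_, hσ⟩
  rw [mk_mul, mk_zpow, mk_mul, mk_mul, mk_inv, hf, MonoidHom.comp_apply, mk'_apply,
    ← zpow_mul, Int.units_coe_mul_self, zpow_one, sq]

end Extension

/-- In an extension `0 → ⟨z⟩ → S → K → 0` with `z` of infinite order and
`K` virtually cyclic, for every `g ∈ S` with `𝔭(g)` of infinite order there exists
`g' ∈ 𝔭⁻¹(𝔭(⟨g⟩))` with `g' ∉ ⟨z⟩` such that `⟨g'⟩` is normal in `S`. -/
theorem straightening_central_direction {S : Type*} [Group S] (z : S)
    (hz : ¬IsOfFinOrder z) [hn : (Subgroup.zpowers z).Normal]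
    (hK : ∃ H : Subgroup (S ⧸ Subgroup.zpowers z), H.FiniteIndex ∧ IsCyclic H)
    (g : S)
    (hg : ¬IsOfFinOrder (QuotientGroup.mk g : S ⧸ Subgroup.zpowers z)) :
    ∃ g' : S,
      (QuotientGroup.mk g' : S ⧸ Subgroup.zpowers z) ∈
        Subgroup.zpowers (QuotientGroup.mk g : S ⧸ Subgroup.zpowers z) ∧
      g' ∉ Subgroup.zpowers z ∧
      (Subgroup.zpowers g').Normal := by
  obtain ⟨M, hMn, hMfi, hMz, hMcyc⟩ := exists_normal_finiteIndex_commute_map_isCyclic hz hK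
  obtain ⟨q₀, hq₀⟩ := (M.map _).isCyclic_iff_exists_zpowers_eq_top.1 hMcyc
  obtain ⟨w, hw, rfl⟩ := Subgroup.mem_map.1 (hq₀ ▸ mem_zpowers q₀)
  obtain ⟨R, hR, -, hgR⟩ := exists_pow_mem_of_index_ne_zero hMfi.index_ne_zero g
  obtain ⟨k, hk⟩ := mem_zpowers_iff.1 (hq₀ ▸ mem_map_of_mem (QuotientGroup.mk' _) hgR)
  simp only [map_pow, QuotientGroup.mk'_apply] at hk
  have hw' : ¬IsOfFinOrder (w : S ⧸ zpowers z) := fun h ↦ hg ((hk ▸ h.zpow).of_pow hR.ne')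
  obtain ⟨v, hv, hvconj⟩ := exists_mk_eq_sq_forall_conj_eq_zpow_units hz hMz hw hq₀.symm hw'
  have hvk : ((v ^ k : S) : S ⧸ zpowers z) = (g : S ⧸ zpowers z) ^ (2 * R) := by
    rw [QuotientGroup.mk_zpow, hv, ← zpow_natCast, ← zpow_mul, mul_comm, zpow_mul, hk,
      zpow_natCast, pow_mul']
  refine ⟨v ^ k, ?_, fun hmem ↦ ?_, normal_zpowers_of_conj_eq_zpow_units fun s ↦ ?_⟩
  · exact hvk ▸ pow_mem (mem_zpowers _) _
  · rw [← QuotientGroup.eq_one_iff, hvk] at hmem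
    exact hg (isOfFinOrder_iff_pow_eq_one.2 ⟨2 * R, by positivity, hmem⟩)
  · obtain ⟨u, hu⟩ := hvconj s
    exact ⟨u, by rw [← conj_zpow, hu, ← zpow_mul, ← zpow_mul, mul_comm]⟩
end

section
/- Let X̄ be a triangle- and square-free simplicial graph and X its blowup with respect to graphs {L_v}. For an edge-type simplex Δ = {(v,x)} (the edge joining the apex v to a point x ∈ L_v^{(0)}), if v has valence ≥ 2 in X̄, then the saturation Sat(Δ) = {vertices lying in some simplex Δ' with Lk(Δ') = Lk(Δ)} is exactly the vertex set of Squid(v). -/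
/-- The projection of the blowup's vertex set to the base graph's vertex set. -/
def squidProj {V : Type*} (L : V → Type*) : (V ⊕ (Σ v : V, L v)) → V
  | Sum.inl v => v
  | Sum.inr x => x.1

/-- Whether a vertex of the blowup is the apex (tip) of its squid. -/
def isApex {V : Type*} (L : V → Type*) : (V ⊕ (Σ v : V, L v)) → Prop
  | Sum.inl _ => True
  | Sum.inr _ => False

/-- The blowup of a simplicial graph `X̄` with respect to a family of graphs `{L_v}`. -/
def blowup {V : Type*} (Xbar : SimpleGraph V) (L : V → Type*) :
    SimpleGraph (V ⊕ (Σ v : V, L v)) where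
  Adj a b := Xbar.Adj (squidProj L a) (squidProj L b) ∨
    (squidProj L a = squidProj L b ∧ a ≠ b ∧ (isApex L a ∨ isApex L b))
  symm := by
    constructor
    intro a b h
    rcases h with h | ⟨h1, h2, h3⟩
    · exact Or.inl h.symm
    · exact Or.inr ⟨h1.symm, h2.symm, h3.symm⟩
  loopless := by
    constructor
    intro a h
    rcases h with h | ⟨_, h2, _⟩
    · exact Xbar.loopless.irrefl _ h
    · exact h2 rfl

/-- The link of a simplex (set of vertices) in a graph (viewed as a flag complex). -/
def simplexLink {W : Type*} (G : SimpleGraph W) (s : Set W) : Set W :=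
  {u | u ∉ s ∧ ∀ a ∈ s, G.Adj u a}

/-!
The link of the edge `{v, x}` is `p⁻¹(N(v))`, which depends on `v` alone, so every edge of
`Squid(v)` has that link and `Squid(v) ⊆ Sat(Δ)`. Conversely, a vertex `u` of a simplex with
this link is joined to the apices of two distinct neighbours `w, w'` of `v`, so `p u` equals or
is adjacent to each of `w, w'`; triangle- and square-freeness of `X̄` then force `p u = v`.
-/

theorem SimpleGraph.eq_of_adj_or_eq_of_adj_or_eq {V : Type*} {G : SimpleGraph V}
    (htri : G.CliqueFree 3)
    (hsq : ∀ a b c d : V, G.Adj a b → G.Adj b c → G.Adj c d → G.Adj d a → a = c ∨ b = d)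
    {v w w' z : V} (hne : w ≠ w') (hw : G.Adj v w) (hw' : G.Adj v w')
    (hz : G.Adj w z ∨ w = z) (hz' : G.Adj w' z ∨ w' = z) : z = v := by
  classical
  have no_triangle : ¬ G.Adj w w' := fun h =>
    htri _ (SimpleGraph.is3Clique_triple_iff.2 ⟨hw, hw', h⟩)
  rcases hz with hz | rfl <;> rcases hz' with hz' | rfl
  · exact ((hsq v w z w' hw hz hz'.symm hw'.symm).resolve_right hne).symm
  · exact absurd hz no_triangle
  · exact absurd hz'.symm no_triangle
  · exact absurd rfl hne

section Blowup

variable {V : Type*} {Xbar : SimpleGraph V} {L : V → Type*}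

theorem blowup_adj_squidProj {a b : V ⊕ (Σ v : V, L v)} (h : (blowup Xbar L).Adj a b) :
    Xbar.Adj (squidProj L a) (squidProj L b) ∨ squidProj L a = squidProj L b :=
  h.imp_right And.left

variable (Xbar) in
theorem simplexLink_blowup_edge (v : V) (y : L v) :
    simplexLink (blowup Xbar L) {Sum.inl v, Sum.inr ⟨v, y⟩} =
      {u | Xbar.Adj (squidProj L u) v} := by
  ext u
  constructor
  · rintro ⟨hu, hadj⟩
    rcases hadj (Sum.inr ⟨v, y⟩) (by simp) with h | ⟨hp, -, hapex | hapex⟩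
    · exact h
    · cases u with
      | inl a => exact absurd (by simp [show a = v from hp]) hu
      | inr _ => exact hapex.elim
    · exact hapex.elim
  · intro h
    refine ⟨?_, ?_⟩
    · rintro (rfl | rfl) <;> exact Xbar.irrefl h
    · rintro a (rfl | rfl) <;> exact Or.inl h

variable (Xbar) in
theorem isClique_blowup_edge (v : V) (y : L v) :
    (blowup Xbar L).IsClique ({Sum.inl v, Sum.inr ⟨v, y⟩} : Set (V ⊕ (Σ v : V, L v))) := by
  have hadj : (blowup Xbar L).Adj (Sum.inl v) (Sum.inr ⟨v, y⟩) :=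
    Or.inr ⟨rfl, by simp, Or.inl trivial⟩
  exact SimpleGraph.isClique_pair.2 fun _ => hadj

theorem exists_mem_edge_of_squidProj (u : V ⊕ (Σ v : V, L v)) (x : L (squidProj L u)) :
    ∃ y : L (squidProj L u), u ∈ ({Sum.inl (squidProj L u), Sum.inr ⟨squidProj L u, y⟩} :
      Set (V ⊕ (Σ v : V, L v))) := by
  cases u with
  | inl a => exact ⟨x, by simp [squidProj]⟩
  | inr a => exact ⟨a.2, by simp [squidProj]⟩

theorem squidProj_eq_of_simplexLink_eq_edge (htri : Xbar.CliqueFree 3)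
    (hsq : ∀ a b c d : V, Xbar.Adj a b → Xbar.Adj b c → Xbar.Adj c d → Xbar.Adj d a →
      a = c ∨ b = d)
    {v w w' : V} (x : L v) (hne : w ≠ w') (hw : Xbar.Adj v w) (hw' : Xbar.Adj v w')
    {s : Set (V ⊕ (Σ v : V, L v))}
    (hlink : simplexLink (blowup Xbar L) s =
      simplexLink (blowup Xbar L) {Sum.inl v, Sum.inr ⟨v, x⟩})
    {u : V ⊕ (Σ v : V, L v)} (hu : u ∈ s) : squidProj L u = v := by
  have near_apex {z : V} (hz : Xbar.Adj v z) :
      Xbar.Adj z (squidProj L u) ∨ z = squidProj L u := by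
    have hz_link : Sum.inl z ∈ simplexLink (blowup Xbar L) s := by
      rw [hlink, simplexLink_blowup_edge]
      exact hz.symm
    exact blowup_adj_squidProj (hz_link.2 u hu)
  exact Xbar.eq_of_adj_or_eq_of_adj_or_eq htri hsq hne hw hw' (near_apex hw) (near_apex hw')

end Blowup

/-- If `X̄` is triangle- and square-free and `v` has valence ≥ 2, then
the saturation of the edge-type simplex `Δ = {(v,x)}` (the union of all simplices
with the same link as `Δ`) is exactly the vertex set of `Squid(v)`. -/
theorem saturation_of_edge_type_simplex {V : Type*} (Xbar : SimpleGraph V)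
    (L : V → Type*) (htri : Xbar.CliqueFree 3)
    (hsq : ∀ a b c d : V, Xbar.Adj a b → Xbar.Adj b c → Xbar.Adj c d → Xbar.Adj d a →
      a = c ∨ b = d)
    (v : V) (x : L v)
    (w w' : V) (hne : w ≠ w') (hw : Xbar.Adj v w) (hw' : Xbar.Adj v w') :
    {u : V ⊕ (Σ v : V, L v) | ∃ s : Set (V ⊕ (Σ v : V, L v)),
        (blowup Xbar L).IsClique s ∧
        simplexLink (blowup Xbar L) s =
          simplexLink (blowup Xbar L)
            ({Sum.inl v, Sum.inr ⟨v, x⟩} : Set (V ⊕ (Σ v : V, L v))) ∧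
        u ∈ s} =
      {u : V ⊕ (Σ v : V, L v) | squidProj L u = v} := by
  ext u
  constructor
  · rintro ⟨s, -, hlink, hu⟩
    exact squidProj_eq_of_simplexLink_eq_edge htri hsq x hne hw hw' hlink hu
  · rintro (rfl : squidProj L u = v)
    obtain ⟨y, hy⟩ := exists_mem_edge_of_squidProj u x
    refine ⟨_, isClique_blowup_edge Xbar _ y, ?_, hy⟩
    rw [simplexLink_blowup_edge, simplexLink_blowup_edge]
end

section
/- Let H be a group, m : H → ℝ a nonzero homogeneous quasimorphism with defect D, and C > 2D a constant such that some value of m lies in (0, C/2). Then the set τ = {g ∈ H : |m(g)| < C} generates H. -/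
/-!
Fix `h` with `0 < m h < C / 2` and let `n` be the integer nearest to `m g / m h`. By homogeneity
`m (h ^ (-n)) = -n * m h`, so the quasimorphism inequality gives
`|m (g * h ^ (-n))| ≤ m h / 2 + D < C`; hence `g = (g * h ^ (-n)) * h ^ n` is a product of
elements of `{x | |m x| < C}`.
-/

theorem abs_sub_round_div_mul_le {α : Type*} [Field α] [LinearOrder α] [IsStrictOrderedRing α]
    [FloorRing α] {a : α} (ha : 0 < a) (x : α) : |x - round (x / a) * a| ≤ a / 2 := by
  calc |x - round (x / a) * a| = |x / a - round (x / a)| * a := by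
        rw [← abs_of_pos ha, ← abs_mul, abs_of_pos ha, sub_mul, div_mul_cancel₀ x ha.ne']
    _ ≤ 1 / 2 * a := by gcongr; exact abs_sub_round _
    _ = a / 2 := by ring

theorem Subgroup.closure_eq_top_of_forall_mul_zpow_mem {G : Type*} [Group G] {S : Set G} {h : G}
    (hh : h ∈ S) (hS : ∀ g, ∃ n : ℤ, g * h ^ n ∈ S) : closure S = ⊤ := by
  refine (eq_top_iff' _).2 fun g => ?_
  obtain ⟨n, hn⟩ := hS g
  rw [← mul_inv_cancel_right g (h ^ n)]
  exact mul_mem (subset_closure hn) (inv_mem (zpow_mem (subset_closure hh) n))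

section Quasimorphism

variable {H : Type*} [Group H] {m : H → ℝ} {D : ℝ}

theorem abs_apply_mul_le_of_defect (hD : ∀ h k : H, |m (h * k) - m h - m k| ≤ D) (g k : H) :
    |m (g * k)| ≤ |m g + m k| + D := by
  have hgk := abs_le.1 (hD g k)
  rw [abs_le]
  constructor <;> linarith [le_abs_self (m g + m k), neg_abs_le (m g + m k)]

theorem exists_zpow_abs_apply_mul_le (hD : ∀ h k : H, |m (h * k) - m h - m k| ≤ D)
    (hhom : ∀ (h : H) (n : ℤ), m (h ^ n) = (n : ℝ) * m h) {h : H} (hh : 0 < m h) (g : H) :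
    ∃ n : ℤ, |m (g * h ^ n)| ≤ m h / 2 + D := by
  refine ⟨-round (m g / m h), ?_⟩
  have hround : |m g + m (h ^ (-round (m g / m h)))| ≤ m h / 2 := by
    rw [hhom, Int.cast_neg, neg_mul, ← sub_eq_add_neg]
    exact abs_sub_round_div_mul_le hh (m g)
  linarith [abs_apply_mul_le_of_defect hD g (h ^ (-round (m g / m h)))]

end Quasimorphism

theorem quasimorphism_sublevel_generates_general {H : Type*} [Group H] (m : H → ℝ) (D : ℝ)
    (hD : ∀ h k : H, |m (h * k) - m h - m k| ≤ D)
    (hhom : ∀ (h : H) (n : ℤ), m (h ^ n) = (n : ℝ) * m h)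
    (C : ℝ) (hC : 2 * D < C)
    (hval : ∃ h : H, m h ∈ Set.Ioo 0 (C / 2)) :
    Subgroup.closure {g : H | |m g| < C} = ⊤ := by
  obtain ⟨h, hh_pos, hh_lt⟩ := hval
  refine Subgroup.closure_eq_top_of_forall_mul_zpow_mem (h := h) ?_ fun g => ?_
  · show |m h| < C
    rw [abs_of_pos hh_pos]
    linarith
  · obtain ⟨n, hn⟩ := exists_zpow_abs_apply_mul_le hD hhom hh_pos g
    exact ⟨n, show |m (g * h ^ n)| < C by linarith⟩

/-- If `m` is a nonzero homogeneous quasimorphism with defect `D`,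
`C > 2D`, and some value of `m` lies in `(0, C/2)`, then
`τ = {g : |m g| < C}` generates `H`. -/
theorem quasimorphism_sublevel_generates {H : Type*} [Group H] (m : H → ℝ) (D : ℝ)
    (hD : ∀ h k : H, |m (h * k) - m h - m k| ≤ D)
    (hhom : ∀ (h : H) (n : ℤ), m (h ^ n) = (n : ℝ) * m h)
    (hm : m ≠ 0)
    (C : ℝ) (hC : 2 * D < C)
    (hval : ∃ h : H, m h ∈ Set.Ioo 0 (C / 2)) :
    Subgroup.closure {g : H | |m g| < C} = ⊤ :=
  quasimorphism_sublevel_generates_general m D hD hhom C hC hval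
end

section
/- Let H be a group, m : H → ℝ a homogeneous quasimorphism with defect D, and τ = {g ∈ H : |m(g)| < C} for some C > 2D. If z ∈ H is an element with m(z) ≠ 0, then the map n ↦ z^n is a quasi-isometric embedding of ℤ into (H, d_τ): specifically d_τ(1, z^n) ≥ |n|·|m(z)|/(C + D) for all n, while d_τ(1, z^n) ≤ |n| d_τ(1,z). -/
/-!
A word of length `k` in `τ ∪ τ⁻¹` has quasimorphism value at most `k (C + D)` in absolute value,
since each letter contributes less than `C` and each multiplication an error of at most `D`.
Homogeneity turns this into `|n| |m z| ≤ (C + D) d_τ(1, zⁿ)`. The upper bound is subadditivity of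
word length, together with `d_τ(1, g⁻¹) ≤ d_τ(1, g)` for negative `n`.
-/

/-- The word length of `g` with respect to a generating set `τ` (distance from `1`
to `g` in the Cayley graph `Cay(H, τ)`). -/
noncomputable def wordLength {H : Type*} [Group H] (τ : Set H) (g : H) : ℕ :=
  sInf {n : ℕ | ∃ l : List H, (∀ x ∈ l, x ∈ τ ∨ x⁻¹ ∈ τ) ∧ l.prod = g ∧ l.length = n}

namespace WordLength

variable {H : Type*} [Group H] (τ : Set H)

def IsWord (l : List H) : Prop := ∀ x ∈ l, x ∈ τ ∨ x⁻¹ ∈ τ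

variable {τ}

theorem isWord_append {l l' : List H} (hl : IsWord τ l) (hl' : IsWord τ l') :
    IsWord τ (l ++ l') := by
  intro x hx
  rcases List.mem_append.mp hx with hx | hx
  exacts [hl x hx, hl' x hx]

theorem isWord_reverse_map_inv {l : List H} (hl : IsWord τ l) :
    IsWord τ (l.map (·⁻¹)).reverse := by
  intro x hx
  obtain ⟨y, hy, rfl⟩ := List.mem_map.mp (List.mem_reverse.mp hx)
  rw [inv_inv]
  exact (hl y hy).symm

theorem exists_isWord_of_mem_closure {g : H} (hg : g ∈ Subgroup.closure τ) :
    ∃ l : List H, IsWord τ l ∧ l.prod = g := by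
  rw [← Subgroup.mem_toSubmonoid, Subgroup.closure_toSubmonoid] at hg
  obtain ⟨l, hl, rfl⟩ := Submonoid.exists_list_of_mem_closure hg
  exact ⟨l, fun x hx => (hl x hx).imp id Set.mem_inv.mp, rfl⟩

theorem wordLength_le {l : List H} (hl : IsWord τ l) : wordLength τ l.prod ≤ l.length := by
  exact Nat.sInf_le ⟨l, hl, rfl, rfl⟩

theorem exists_isWord_length_eq {g : H} (hg : g ∈ Subgroup.closure τ) :
    ∃ l : List H, IsWord τ l ∧ l.prod = g ∧ l.length = wordLength τ g := by
  obtain ⟨l, hl, hprod⟩ := exists_isWord_of_mem_closure hg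
  exact Nat.sInf_mem (s := {n | ∃ l : List H, IsWord τ l ∧ l.prod = g ∧ l.length = n})
    ⟨l.length, l, hl, hprod, rfl⟩

theorem wordLength_mul_le {g h : H} (hg : g ∈ Subgroup.closure τ)
    (hh : h ∈ Subgroup.closure τ) : wordLength τ (g * h) ≤ wordLength τ g + wordLength τ h := by
  obtain ⟨l, hl, rfl, hlen⟩ := exists_isWord_length_eq hg
  obtain ⟨l', hl', rfl, hlen'⟩ := exists_isWord_length_eq hh
  simpa [hlen, hlen'] using wordLength_le (isWord_append hl hl')

theorem wordLength_pow_le {g : H} (hg : g ∈ Subgroup.closure τ) (k : ℕ) :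
    wordLength τ (g ^ k) ≤ k * wordLength τ g := by
  induction k with
  | zero => simpa using wordLength_le (τ := τ) (l := []) (by simp [IsWord])
  | succ k ih =>
    rw [pow_succ, add_one_mul]
    exact (wordLength_mul_le (Subgroup.pow_mem _ hg k) hg).trans (by omega)

theorem wordLength_inv_le {g : H} (hg : g ∈ Subgroup.closure τ) :
    wordLength τ g⁻¹ ≤ wordLength τ g := by
  obtain ⟨l, hl, rfl, hlen⟩ := exists_isWord_length_eq hg
  simpa [List.prod_inv_reverse, hlen] using wordLength_le (isWord_reverse_map_inv hl)

theorem wordLength_zpow_le {g : H} (hg : g ∈ Subgroup.closure τ) (n : ℤ) :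
    wordLength τ (g ^ n) ≤ n.natAbs * wordLength τ g := by
  obtain ⟨k, rfl | rfl⟩ := Int.eq_nat_or_neg n
  · simpa using wordLength_pow_le hg k
  · simpa using (wordLength_inv_le (Subgroup.pow_mem _ hg k)).trans (wordLength_pow_le hg k)

end WordLength

section Quasimorphism

variable {H : Type*} [Group H] {m : H → ℝ} {D : ℝ}

theorem abs_map_list_prod_le (hD : ∀ h k : H, |m (h * k) - m h - m k| ≤ D) (h1 : m 1 = 0)
    {C : ℝ} {l : List H} (hl : ∀ x ∈ l, |m x| ≤ C) : |m l.prod| ≤ l.length * (C + D) := by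
  induction l with
  | nil => simp [h1]
  | cons x t ih =>
    have hx := hl x List.mem_cons_self
    have ht := ih fun y hy => hl y (List.mem_cons_of_mem _ hy)
    have hmul := abs_sub_le_iff.mp (hD x t.prod)
    rw [List.prod_cons, List.length_cons, Nat.cast_succ]
    rw [abs_le] at hx ht ⊢
    constructor <;> linarith

theorem map_one_of_homogeneous (hhom : ∀ (h : H) (n : ℤ), m (h ^ n) = n * m h) : m 1 = 0 := by
  simpa using hhom 1 0

theorem map_inv_of_homogeneous (hhom : ∀ (h : H) (n : ℤ), m (h ^ n) = n * m h) (h : H) :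
    m h⁻¹ = -m h := by
  simpa using hhom h (-1)

open WordLength in
theorem abs_map_le_wordLength_mul (hD : ∀ h k : H, |m (h * k) - m h - m k| ≤ D)
    (hhom : ∀ (h : H) (n : ℤ), m (h ^ n) = n * m h) {C : ℝ} {g : H}
    (hg : g ∈ Subgroup.closure {g : H | |m g| < C}) :
    |m g| ≤ wordLength {g : H | |m g| < C} g * (C + D) := by
  obtain ⟨l, hl, rfl, hlen⟩ := exists_isWord_length_eq hg
  rw [← hlen]
  refine abs_map_list_prod_le hD (map_one_of_homogeneous hhom) fun x hx => ?_
  rcases hl x hx with hx | hx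
  · exact hx.le
  · simpa [map_inv_of_homogeneous hhom] using (show |m x⁻¹| < C from hx).le

end Quasimorphism

theorem zpowers_qi_embedded_general {H : Type*} [Group H] (m : H → ℝ) (D : ℝ)
    (hD : ∀ h k : H, |m (h * k) - m h - m k| ≤ D)
    (hhom : ∀ (h : H) (n : ℤ), m (h ^ n) = (n : ℝ) * m h)
    (C : ℝ)
    (hgen : Subgroup.closure {g : H | |m g| < C} = ⊤)
    (z : H) :
    ∀ n : ℤ,
      (|(n : ℝ)| * |m z|) / (C + D) ≤ (wordLength {g : H | |m g| < C} (z ^ n) : ℝ) ∧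
      (wordLength {g : H | |m g| < C} (z ^ n) : ℝ) ≤
        |(n : ℝ)| * (wordLength {g : H | |m g| < C} z : ℝ) := by
  intro n
  have hmem : ∀ g : H, g ∈ Subgroup.closure {g : H | |m g| < C} := by simp [hgen]
  constructor
  · have hbound := abs_map_le_wordLength_mul hD hhom (hmem (z ^ n))
    rw [hhom, abs_mul] at hbound
    rcases le_or_gt (C + D) 0 with hCD | hCD
    · exact (div_nonpos_of_nonneg_of_nonpos (by positivity) hCD).trans (Nat.cast_nonneg _)
    · rwa [div_le_iff₀ hCD]
  · rw [← Int.cast_abs, ← Int.natCast_natAbs]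
    exact_mod_cast WordLength.wordLength_zpow_le (hmem z) n

/-- For a homogeneous quasimorphism `m` with defect `D`, `C > 2D`,
and `τ = {g : |m g| < C}` generating `H`, any `z` with `m(z) ≠ 0` gives a
quasi-isometric embedding `n ↦ z^n` of `ℤ` into `(H, d_τ)`:
`d_τ(1, z^n) ≥ |n|·|m z|/(C + D)` and `d_τ(1, z^n) ≤ |n|·d_τ(1, z)`. -/
theorem zpowers_qi_embedded {H : Type*} [Group H] (m : H → ℝ) (D : ℝ)
    (hD : ∀ h k : H, |m (h * k) - m h - m k| ≤ D)
    (hhom : ∀ (h : H) (n : ℤ), m (h ^ n) = (n : ℝ) * m h)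
    (C : ℝ) (hC : 2 * D < C)
    (hgen : Subgroup.closure {g : H | |m g| < C} = ⊤)
    (z : H) (hz : m z ≠ 0) :
    ∀ n : ℤ,
      (|(n : ℝ)| * |m z|) / (C + D) ≤ (wordLength {g : H | |m g| < C} (z ^ n) : ℝ) ∧
      (wordLength {g : H | |m g| < C} (z ^ n) : ℝ) ≤
        |(n : ℝ)| * (wordLength {g : H | |m g| < C} z : ℝ) :=
  zpowers_qi_embedded_general m D hD hhom C hgen z
end

section
/- Let Λ be a finite, connected, triangle-free simplicial graph with at least 2 vertices, and let a be a vertex of Λ. Then the centralizer C(a) in the right-angled Artin group G_Λ splits as a direct product C(a) = ⟨a⟩ × F(Lk_Λ(a)), where F(Lk_Λ(a)) is the free group on the set of vertices adjacent to a; moreover the subgroup generated by Lk_Λ(a) in G_Λ is free. -/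
/-- The commutator relators of a right-angled Artin group on the graph `Λ`. -/
def raagRels {V : Type*} (Λ : SimpleGraph V) : Set (FreeGroup V) :=
  {r | ∃ u v : V, Λ.Adj u v ∧
    r = FreeGroup.of u * FreeGroup.of v * (FreeGroup.of u)⁻¹ * (FreeGroup.of v)⁻¹}

/-- The right-angled Artin group on the graph `Λ`. -/
abbrev RAAG {V : Type*} (Λ : SimpleGraph V) := PresentedGroup (raagRels Λ)

/-- The standard generator of the RAAG corresponding to a vertex. -/
def raagOf {V : Type*} (Λ : SimpleGraph V) (v : V) : RAAG Λ := PresentedGroup.of v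

/-!
Deleting the vertex `a` exhibits `G_Λ` as a retract of the amalgamated product
`A *_C B` with `A = G_{Λ - a}`, `B = ⟨a⟩ × F(Lk a)` and `C = F(Lk a)`. Since `Λ` is
triangle-free, the link of `a` is an independent set, so sending `a` to the generator of `ℤ`, a
link vertex to its free generator and every other vertex to `1` defines a left inverse of
`B → G_Λ`; in particular `C` embeds in both factors. In an amalgamated product with injective
structure maps, normal forms show that an element conjugating `c ∈ B` back into `B` lies in `B`
as soon as no `B`-conjugate of `c` lies in `C`. This applies to `c = a`, whose conjugates in `B`
all have `ℤ`-coordinate `1`, so `C(a)` is the isomorphic image of `B`.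
-/

open Function Monoid

namespace Monoid.PushoutI

open CoprodI

variable {ι : Type*} {H : Type*} {G : ι → Type*} [Group H] [∀ i, Group (G i)]
  {φ : ∀ i, H →* G i}

theorem Reduced.of_cons {i : ι} {g : G i} {w : Word G} {hw : w.fstIdx ≠ some i} {hg : g ≠ 1}
    (h : Reduced φ (Word.cons g w hw hg)) : Reduced φ w :=
  fun l hl => h l (List.mem_cons_of_mem _ hl)

theorem Reduced.cons {i : ι} {g : G i} {w : Word G} (hw : w.fstIdx ≠ some i) (hg : g ≠ 1)
    (hgφ : g ∉ (φ i).range) (h : Reduced φ w) : Reduced φ (Word.cons g w hw hg) := by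
  rintro l (_ | ⟨_, hl⟩)
  exacts [hgφ, h l hl]

theorem NormalWord.reduced {d : NormalWord.Transversal φ} (w : NormalWord d) :
    Reduced φ w.toWord := by
  rintro ⟨i, g⟩ hl hgφ
  have hmul := (d.compl i).1 (a₁ := (⟨g, hgφ⟩, ⟨1, d.one_mem i⟩))
    (a₂ := (⟨1, one_mem _⟩, ⟨g, w.normalized i g hl⟩)) (by simp)
  exact w.ne_one _ hl (congrArg (fun p => (p.1 : G i)) hmul)

theorem Reduced.ofCoprodI_prod_notMem_range_of_fstIdx_ne (hφ : ∀ i, Injective (φ i)) {j : ι}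
    {w : Word G} (hw : Reduced φ w) (hne : w ≠ .empty) (hfst : w.fstIdx ≠ some j) :
    ofCoprodI w.prod ∉ (of (φ := φ) j).range := by
  rintro ⟨b, hb⟩
  by_cases hbφ : b ∈ (φ j).range
  · obtain ⟨h, rfl⟩ := hbφ
    exact hne (hw.eq_empty_of_mem_range hφ ⟨h, by rw [← hb, of_apply_eq_base]⟩)
  · -- prepending `b⁻¹` to `w` gives a nonempty reduced word with product `1`
    have hb1 : b⁻¹ ≠ 1 := fun h => hbφ (inv_eq_one.1 h ▸ one_mem _)
    have hcons := (hw.cons hfst hb1 (by rwa [inv_mem_iff])).eq_empty_of_mem_range hφ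
      ⟨1, by simp [Word.prod_cons, hb]⟩
    exact Word.ext_iff.not.2 (by simp) hcons

theorem Reduced.ofCoprodI_prod_notMem_range_of_two_le_length (hφ : ∀ i, Injective (φ i))
    {j : ι} {w : Word G} (hw : Reduced φ w) (hlen : 2 ≤ w.toList.length) :
    ofCoprodI w.prod ∉ (of (φ := φ) j).range := by
  induction w using Word.consRecOn with
  | empty => simp at hlen
  | cons i g w hfst hg _ =>
    have hne : w ≠ .empty := by rintro rfl; simp at hlen
    by_cases hij : i = j
    · subst hij
      rintro ⟨b, hb⟩
      refine hw.of_cons.ofCoprodI_prod_notMem_range_of_fstIdx_ne hφ hne hfst ⟨g⁻¹ * b, ?_⟩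
      rw [map_mul, hb, Word.prod_cons, map_mul, ofCoprodI_of, map_inv, inv_mul_cancel_left]
    · exact hw.ofCoprodI_prod_notMem_range_of_fstIdx_ne hφ (by simp [Word.ext_iff])
        (by simpa using hij)

theorem Reduced.exists_ofCoprodI_prod_eq_of_mul (j : ι) {w₀ : Word G} (hw₀ : Reduced φ w₀) :
    ∃ (b : G j) (w : Word G), Reduced φ w ∧ w.fstIdx ≠ some j ∧
      ofCoprodI (φ := φ) w₀.prod = of j b * ofCoprodI w.prod := by
  induction w₀ using Word.consRecOn with
  | empty => exact ⟨1, .empty, fun _ h => by simp at h, by simp [Word.fstIdx], by simp⟩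
  | cons i g w hfst hg _ =>
    by_cases hij : i = j
    · subst hij
      exact ⟨g, w, hw₀.of_cons, hfst, by simp [Word.prod_cons]⟩
    · exact ⟨1, _, hw₀, by simpa using hij, by simp⟩

theorem exists_eq_of_mul_ofCoprodI_prod (hφ : ∀ i, Injective (φ i)) (j : ι) (g : PushoutI φ) :
    ∃ (b : G j) (w : Word G), Reduced φ w ∧ w.fstIdx ≠ some j ∧
      g = of j b * ofCoprodI w.prod := by
  classical
  obtain ⟨d⟩ := NormalWord.transversal_nonempty φ hφ
  set w := NormalWord.equiv (d := d) g
  obtain ⟨b, w', hw', hfst, hprod⟩ := w.reduced.exists_ofCoprodI_prod_eq_of_mul j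
  refine ⟨φ j w.head * b, w', hw', hfst, ?_⟩
  calc g = w.prod := (NormalWord.equiv.symm_apply_apply g).symm
    _ = base φ w.head * ofCoprodI w.toWord.prod := rfl
    _ = of j (φ j w.head * b) * ofCoprodI w'.prod := by
      rw [hprod, map_mul, of_apply_eq_base, mul_assoc]

theorem reduced_toWord_singleton_iff {i : ι} {x : G i} {hx : x ≠ 1} :
    Reduced φ (NeWord.singleton x hx).toWord ↔ x ∉ (φ i).range := by
  simp [Reduced, NeWord.toWord]

theorem reduced_toWord_append_iff {i j k l : ι} {w₁ : NeWord G i j} {hne : j ≠ k}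
    {w₂ : NeWord G k l} :
    Reduced φ (w₁.append hne w₂).toWord ↔
      Reduced φ w₁.toWord ∧ Reduced φ w₂.toWord := by
  simp only [Reduced, NeWord.toWord, NeWord.toList, List.mem_append, or_imp, forall_and]

theorem Reduced.toWord_inv {i j : ι} {w : NeWord G i j} (hw : Reduced φ w.toWord) :
    Reduced φ w.inv.toWord := by
  induction w with
  | singleton x hx => simpa [NeWord.inv, reduced_toWord_singleton_iff] using hw
  | append w₁ hne w₂ ih₁ ih₂ =>
    rw [reduced_toWord_append_iff] at hw
    exact reduced_toWord_append_iff.2 ⟨ih₂ hw.2, ih₁ hw.1⟩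

theorem _root_.Monoid.CoprodI.NeWord.two_le_length_toList_append {i j k l : ι}
    (w₁ : NeWord G i j) (hne : j ≠ k) (w₂ : NeWord G k l) :
    2 ≤ (w₁.append hne w₂).toList.length := by
  have h₁ := List.length_pos_iff.2 w₁.toList_ne_nil
  have h₂ := List.length_pos_iff.2 w₂.toList_ne_nil
  simp only [NeWord.toList, List.length_append]
  omega

theorem Reduced.conj_notMem_range (hφ : ∀ i, Injective (φ i)) {j : ι} {c : G j}
    (hc : c ∉ (φ j).range) {w : Word G} (hw : Reduced φ w) (hne : w ≠ .empty)
    (hfst : w.fstIdx ≠ some j) :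
    (ofCoprodI w.prod)⁻¹ * of j c * ofCoprodI w.prod ∉ (of (φ := φ) j).range := by
  obtain ⟨i, k, v, rfl⟩ := NeWord.of_word w hne
  have hij : i ≠ j := by simpa [Word.fstIdx, NeWord.toWord] using hfst
  have hc1 : c ≠ 1 := fun h => hc (h ▸ one_mem _)
  -- `w⁻¹ c w`, spelled as a reduced word with at least two letters
  set W := v.inv.append hij ((NeWord.singleton c hc1).append hij.symm v)
  have hW : Reduced φ W.toWord := reduced_toWord_append_iff.2
    ⟨hw.toWord_inv, reduced_toWord_append_iff.2 ⟨reduced_toWord_singleton_iff.2 hc, hw⟩⟩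
  have hprod : W.prod = v.prod⁻¹ * CoprodI.of c * v.prod := by simp [W, mul_assoc]
  have := hW.ofCoprodI_prod_notMem_range_of_two_le_length hφ (j := j)
    (NeWord.two_le_length_toList_append _ _ _)
  rwa [← NeWord.prod, hprod, map_mul, map_mul, map_inv, ofCoprodI_of] at this

theorem mem_range_of_conj_mem_range (hφ : ∀ i, Injective (φ i)) {j : ι} {c : G j}
    (hc : ∀ b : G j, b * c * b⁻¹ ∉ (φ j).range) {g : PushoutI φ}
    (hg : g⁻¹ * of j c * g ∈ (of (φ := φ) j).range) : g ∈ (of (φ := φ) j).range := by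
  obtain ⟨b, w, hw, hfst, rfl⟩ := exists_eq_of_mul_ofCoprodI_prod hφ j g
  by_cases hne : w = .empty
  · subst hne
    simp
  · refine absurd ?_ (hw.conj_notMem_range hφ (by simpa using hc b⁻¹) hne hfst)
    convert hg using 1
    simp [mul_assoc]

end Monoid.PushoutI

namespace RAAG

variable {V : Type*} {Λ : SimpleGraph V}

def lift {G : Type*} [Group G] (f : V → G) (hf : ∀ u v, Λ.Adj u v → Commute (f u) (f v)) :
    RAAG Λ →* G :=
  PresentedGroup.toGroup (f := f) <| by
    rintro _ ⟨u, v, huv, rfl⟩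
    simp [(hf u v huv).eq]

@[simp]
theorem lift_raagOf {G : Type*} [Group G] (f : V → G)
    (hf : ∀ u v, Λ.Adj u v → Commute (f u) (f v)) (v : V) : lift f hf (raagOf Λ v) = f v :=
  PresentedGroup.toGroup.of _

theorem hom_ext {G : Type*} [Group G] {f g : RAAG Λ →* G}
    (h : ∀ v, f (raagOf Λ v) = g (raagOf Λ v)) : f = g :=
  PresentedGroup.ext h

theorem commute_raagOf {u v : V} (huv : Λ.Adj u v) : Commute (raagOf Λ u) (raagOf Λ v) := by
  have h := PresentedGroup.one_of_mem (rels := raagRels Λ) ⟨u, v, huv, rfl⟩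
  simp only [map_mul, map_inv] at h
  exact commutatorElement_eq_one_iff_commute.1 h

variable (Λ) (a : V)

def linkHom : FreeGroup (Λ.neighborSet a) →* RAAG Λ :=
  FreeGroup.lift fun b => raagOf Λ b

@[simp]
theorem linkHom_of (b : Λ.neighborSet a) : linkHom Λ a (.of b) = raagOf Λ b :=
  FreeGroup.lift_apply_of

theorem commute_raagOf_linkHom (w : FreeGroup (Λ.neighborSet a)) :
    Commute (raagOf Λ a) (linkHom Λ a w) := by
  induction w using FreeGroup.induction_on with
  | C1 => exact (map_one (linkHom Λ a)).symm ▸ .one_right _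
  | of b => simpa using commute_raagOf b.2
  | inv_of b ih => simpa using ih.inv_right
  | mul x y ihx ihy => simpa using ihx.mul_right ihy

def starHom : Multiplicative ℤ × FreeGroup (Λ.neighborSet a) →* RAAG Λ :=
  MonoidHom.noncommCoprod (zpowersHom _ (raagOf Λ a)) (linkHom Λ a)
    fun m w => (commute_raagOf_linkHom Λ a w).zpow_left m.toAdd

theorem starHom_apply (m : Multiplicative ℤ) (w : FreeGroup (Λ.neighborSet a)) :
    starHom Λ a (m, w) = raagOf Λ a ^ m.toAdd * linkHom Λ a w :=
  rfl

@[simp]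
theorem starHom_ofAdd_one : starHom Λ a (.ofAdd 1, 1) = raagOf Λ a := by
  simp [starHom_apply]

@[simp]
theorem starHom_inr (w : FreeGroup (Λ.neighborSet a)) :
    starHom Λ a (1, w) = linkHom Λ a w := by
  simp [starHom_apply]

theorem range_starHom :
    (starHom Λ a).range = Subgroup.closure (raagOf Λ '' insert a (Λ.neighborSet a)) := by
  refine (MonoidHom.noncommCoprod_range _ _ _).trans ?_
  rw [Subgroup.range_zpowersHom, Subgroup.zpowers_eq_closure,
    linkHom, FreeGroup.range_lift_eq_closure, ← Subgroup.closure_union, Set.image_insert_eq,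
    Set.insert_eq, Set.image_eq_range]

theorem closure_star_le_centralizer :
    Subgroup.closure (raagOf Λ '' insert a (Λ.neighborSet a)) ≤
      Subgroup.centralizer {raagOf Λ a} := by
  rw [Subgroup.closure_le]
  rintro _ ⟨v, rfl | hv, rfl⟩
  exacts [Subgroup.mem_centralizer_singleton_iff.2 rfl,
    Subgroup.mem_centralizer_singleton_iff.2 (commute_raagOf hv).eq.symm]

variable {Λ a}

open Classical in
noncomputable def starRetraction (hind : Λ.IsIndepSet (Λ.neighborSet a)) :
    RAAG Λ →* Multiplicative ℤ × FreeGroup (Λ.neighborSet a) :=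
  lift (fun v => if v = a then (.ofAdd 1, 1) else (1, if h : Λ.Adj a v then .of ⟨v, h⟩ else 1))
    fun u v huv => by
      by_cases hu : u = a <;> by_cases hv : v = a
      · exact absurd (hu.trans hv.symm) huv.ne
      · simp only [if_pos hu, if_neg hv]
        exact MonoidHom.commute_inl_inr _ _
      · simp only [if_neg hu, if_pos hv]
        exact (MonoidHom.commute_inl_inr _ _).symm
      · simp only [if_neg hu, if_neg hv]
        refine .prod (.one_left 1) ?_
        by_cases hau : Λ.Adj a u
        · by_cases hav : Λ.Adj a v
          · exact absurd huv (hind hau hav huv.ne)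
          · simp [hav]
        · simp [hau]

theorem starRetraction_raagOf_self (hind : Λ.IsIndepSet (Λ.neighborSet a)) :
    starRetraction hind (raagOf Λ a) = (.ofAdd 1, 1) := by
  simp [starRetraction]

theorem starRetraction_linkHom (hind : Λ.IsIndepSet (Λ.neighborSet a))
    (w : FreeGroup (Λ.neighborSet a)) : starRetraction hind (linkHom Λ a w) = (1, w) := by
  have : (starRetraction hind).comp (linkHom Λ a) = MonoidHom.inr _ _ := by
    refine FreeGroup.ext_hom _ _ fun b => ?_
    simp [starRetraction, b.2.ne', show Λ.Adj a b from b.2]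
  exact DFunLike.congr_fun this w

theorem starRetraction_starHom (hind : Λ.IsIndepSet (Λ.neighborSet a))
    (x : Multiplicative ℤ × FreeGroup (Λ.neighborSet a)) :
    starRetraction hind (starHom Λ a x) = x := by
  obtain ⟨m, w⟩ := x
  simp [starHom_apply, starRetraction_raagOf_self, starRetraction_linkHom, ← ofAdd_zsmul]

theorem starHom_injective (hind : Λ.IsIndepSet (Λ.neighborSet a)) :
    Injective (starHom Λ a) :=
  LeftInverse.injective (starRetraction_starHom hind)

variable (Λ a)

abbrev amalgamFactor : Bool → Type _
  | false => RAAG (Λ.induce {v | v ≠ a})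
  | true => Multiplicative ℤ × FreeGroup (Λ.neighborSet a)

instance : ∀ i, Group (amalgamFactor Λ a i)
  | false => inferInstanceAs (Group (RAAG _))
  | true => inferInstanceAs (Group (Multiplicative ℤ × _))

def amalgamMap : ∀ i, FreeGroup (Λ.neighborSet a) →* amalgamFactor Λ a i
  | false => FreeGroup.lift fun b => raagOf _ ⟨b, b.2.ne'⟩
  | true => MonoidHom.inr _ _

def ofInduce (s : Set V) : RAAG (Λ.induce s) →* RAAG Λ :=
  lift (fun v => raagOf Λ v) fun _ _ huv => commute_raagOf huv

@[simp]
theorem ofInduce_raagOf (s : Set V) (v : s) : ofInduce Λ s (raagOf _ v) = raagOf Λ v :=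
  lift_raagOf _ _ _

theorem ofInduce_comp_amalgamMap_false :
    (ofInduce Λ _).comp (amalgamMap Λ a false) = linkHom Λ a :=
  FreeGroup.ext_hom _ _ fun b => by simp [amalgamMap]

variable {Λ a}

theorem linkHom_injective (hind : Λ.IsIndepSet (Λ.neighborSet a)) : Injective (linkHom Λ a) :=
  fun x y h => Prod.mk_right_injective 1 (starHom_injective hind (by simpa using h))

theorem amalgamMap_injective (hind : Λ.IsIndepSet (Λ.neighborSet a)) :
    ∀ i, Injective (amalgamMap Λ a i)
  | false => Injective.of_comp (f := ofInduce Λ _) <| by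
      rw [← MonoidHom.coe_comp, ofInduce_comp_amalgamMap_false]
      exact linkHom_injective hind
  | true => Prod.mk_right_injective 1

variable (Λ a)

def amalgamFactorHom : ∀ i, amalgamFactor Λ a i →* RAAG Λ
  | false => ofInduce Λ _
  | true => starHom Λ a

def amalgamToRAAG : PushoutI (amalgamMap Λ a) →* RAAG Λ :=
  PushoutI.lift (amalgamFactorHom Λ a) (linkHom Λ a)
    fun | false => ofInduce_comp_amalgamMap_false Λ a
        | true => MonoidHom.ext (starHom_inr Λ a)

theorem of_false_raagOf_eq_of_true (b : Λ.neighborSet a) :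
    PushoutI.of (φ := amalgamMap Λ a) false (raagOf _ ⟨b, b.2.ne'⟩) =
      PushoutI.of (φ := amalgamMap Λ a) true (1, .of b) := by
  have h := PushoutI.of_apply_eq_base (amalgamMap Λ a) false (.of b)
  rw [← PushoutI.of_apply_eq_base (amalgamMap Λ a) true (.of b)] at h
  simpa [amalgamMap] using h

theorem commute_of_true_of_false (b : Λ.neighborSet a) :
    Commute (PushoutI.of (φ := amalgamMap Λ a) true (.ofAdd 1, 1))
      (PushoutI.of false (raagOf _ ⟨b, b.2.ne'⟩)) := by
  rw [of_false_raagOf_eq_of_true]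
  exact (MonoidHom.commute_inl_inr _ _).map _

open Classical in
noncomputable def raagToAmalgam : RAAG Λ →* PushoutI (amalgamMap Λ a) :=
  lift (fun v => if h : v = a then PushoutI.of true (.ofAdd 1, 1)
      else PushoutI.of false (raagOf _ ⟨v, h⟩))
    fun u v huv => by
      by_cases hu : u = a <;> by_cases hv : v = a
      · exact absurd (hu.trans hv.symm) huv.ne
      · simp only [dif_pos hu, dif_neg hv]
        exact commute_of_true_of_false Λ a ⟨v, hu ▸ huv⟩
      · simp only [dif_neg hu, dif_pos hv]
        exact (commute_of_true_of_false Λ a ⟨u, hv ▸ huv.symm⟩).symm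
      · simp only [dif_neg hu, dif_neg hv]
        exact (commute_raagOf (Λ := Λ.induce {v | v ≠ a}) (u := ⟨u, hu⟩) (v := ⟨v, hv⟩)
          huv).map _

theorem raagToAmalgam_raagOf_self :
    raagToAmalgam Λ a (raagOf Λ a) = PushoutI.of true (.ofAdd 1, 1) := by
  simp [raagToAmalgam]

theorem amalgamToRAAG_of_true (x : Multiplicative ℤ × FreeGroup (Λ.neighborSet a)) :
    amalgamToRAAG Λ a (PushoutI.of true x) = starHom Λ a x :=
  PushoutI.lift_of _ _ _ _

theorem amalgamToRAAG_raagToAmalgam (x : RAAG Λ) :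
    amalgamToRAAG Λ a (raagToAmalgam Λ a x) = x := by
  have : (amalgamToRAAG Λ a).comp (raagToAmalgam Λ a) = MonoidHom.id _ := by
    refine hom_ext fun v => ?_
    by_cases hv : v = a
    · subst hv
      rw [MonoidHom.comp_apply, raagToAmalgam_raagOf_self, amalgamToRAAG_of_true,
        starHom_ofAdd_one, MonoidHom.id_apply]
    · simp [raagToAmalgam, hv, amalgamToRAAG, amalgamFactorHom]
  exact DFunLike.congr_fun this x

variable {Λ a}

theorem centralizer_le_range_starHom (hind : Λ.IsIndepSet (Λ.neighborSet a)) :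
    Subgroup.centralizer {raagOf Λ a} ≤ (starHom Λ a).range := by
  intro g hg
  have hconj :
      (raagToAmalgam Λ a g)⁻¹ * PushoutI.of true (.ofAdd 1, 1) * raagToAmalgam Λ a g ∈
        (PushoutI.of (φ := amalgamMap Λ a) true).range := by
    refine ⟨(.ofAdd 1, 1), ?_⟩
    rw [← raagToAmalgam_raagOf_self, ← map_inv, ← map_mul, ← map_mul, mul_assoc,
      ← Subgroup.mem_centralizer_singleton_iff.1 hg, inv_mul_cancel_left]
  obtain ⟨p, hp⟩ := PushoutI.mem_range_of_conj_mem_range (amalgamMap_injective hind)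
    (fun b ⟨w, hw⟩ => by simpa [amalgamMap, ← ofAdd_zero] using congrArg Prod.fst hw) hconj
  exact ⟨p, by rw [← amalgamToRAAG_of_true, hp, amalgamToRAAG_raagToAmalgam]⟩

end RAAG

theorem raag_centralizer_splits_general {V : Type*} (Λ : SimpleGraph V)
    (htri : Λ.CliqueFree 3)
    (a : V) :
    Subgroup.centralizer {raagOf Λ a} =
      Subgroup.closure (raagOf Λ '' insert a (Λ.neighborSet a)) ∧
    (∃ φ : Multiplicative ℤ × FreeGroup (Λ.neighborSet a) ≃*
        (Subgroup.centralizer {raagOf Λ a} : Subgroup (RAAG Λ)),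
      ((φ (Multiplicative.ofAdd 1, 1) : Subgroup.centralizer {raagOf Λ a}) : RAAG Λ) =
        raagOf Λ a ∧
      ∀ b : Λ.neighborSet a,
        ((φ (1, FreeGroup.of b) : Subgroup.centralizer {raagOf Λ a}) : RAAG Λ) =
          raagOf Λ (b : V)) ∧
    (∃ ψ : FreeGroup (Λ.neighborSet a) →* RAAG Λ,
      Function.Injective ψ ∧ ∀ b : Λ.neighborSet a, ψ (FreeGroup.of b) = raagOf Λ (b : V)) := by
  have hind := Λ.isIndepSet_neighborSet_of_triangleFree htri a
  have hcentralizer : Subgroup.centralizer {raagOf Λ a} =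
      Subgroup.closure (raagOf Λ '' insert a (Λ.neighborSet a)) :=
    le_antisymm ((RAAG.centralizer_le_range_starHom hind).trans (RAAG.range_starHom Λ a).le)
      (RAAG.closure_star_le_centralizer Λ a)
  have hrange := (RAAG.range_starHom Λ a).trans hcentralizer.symm
  refine ⟨hcentralizer, ⟨(MonoidHom.ofInjective (RAAG.starHom_injective hind)).trans
    (MulEquiv.subgroupCongr hrange), ?_, fun b => ?_⟩,
    RAAG.linkHom Λ a, RAAG.linkHom_injective hind, RAAG.linkHom_of Λ a⟩
  · exact RAAG.starHom_ofAdd_one Λ a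
  · exact (RAAG.starHom_inr Λ a _).trans (RAAG.linkHom_of Λ a b)

/-- If `Λ` is finite, connected, triangle-free and has at least two
vertices, then for every vertex `a` the centralizer `C(a)` in the RAAG `G_Λ` is the
subgroup generated by the star of `a`, and it splits as a direct product
`⟨a⟩ × F(Lk_Λ(a))` with `⟨a⟩ ≅ ℤ` and `F(Lk_Λ(a))` the free group on the link of
`a`; moreover the subgroup generated by `Lk_Λ(a)` is free on those generators. -/
theorem raag_centralizer_splits {V : Type*} [Fintype V] (Λ : SimpleGraph V)
    (hconn : Λ.Connected) (htri : Λ.CliqueFree 3) (hcard : 1 < Fintype.card V)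
    (a : V) :
    Subgroup.centralizer {raagOf Λ a} =
      Subgroup.closure (raagOf Λ '' insert a (Λ.neighborSet a)) ∧
    (∃ φ : Multiplicative ℤ × FreeGroup (Λ.neighborSet a) ≃*
        (Subgroup.centralizer {raagOf Λ a} : Subgroup (RAAG Λ)),
      ((φ (Multiplicative.ofAdd 1, 1) : Subgroup.centralizer {raagOf Λ a}) : RAAG Λ) =
        raagOf Λ a ∧
      ∀ b : Λ.neighborSet a,
        ((φ (1, FreeGroup.of b) : Subgroup.centralizer {raagOf Λ a}) : RAAG Λ) =
          raagOf Λ (b : V)) ∧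
    (∃ ψ : FreeGroup (Λ.neighborSet a) →* RAAG Λ,
      Function.Injective ψ ∧ ∀ b : Λ.neighborSet a, ψ (FreeGroup.of b) = raagOf Λ (b : V)) :=
  raag_centralizer_splits_general Λ htri a
end
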